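/- arXiv:1404.5545 — 2 statements merged into one kernel-verified Lean document; each statement's English description precedes it below -/
import Mathlib

section
/- For every f : [n]^d → ℝ, the L1-distance of f to P(B) equals the maximum weight of a matching in the violation graph of f: inf_{g ∈ P(B)} Σ_{x∈[n]^d} |f(x) − g(x)| = max over matchings M of G_f of Σ_{{x,y}∈M} vs_f(x,y). -/
/-!
Every `g ∈ P(B)` satisfies `g x - g y ≤ m(x, y)` on the grid, so that
`vs_f(x, y) ≤ |f x - g x| + |f y - g y|` and no matching weighs more than the distance.
Conversely, `m` satisfies the triangle inequality and `P(B)` is exactly the set of functions with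
`g x - g y ≤ m(x, y)`, so a best approximation `g` exists by compactness. Call an arc `a → b`
tight if `g a - g b = m(a, b)`. There is an integral flow along tight arcs with one unit leaving
each point where `f > g` and one entering each point where `f < g`: a flow of maximal score that
misses a point either has an augmenting path, or the set of points reachable by residual arcs is
one on which `g` can be raised at a profit. Tight arcs compose, so the flow can be shortcut until
its support is a matching, and on each of its pairs `(a, b)` the violation
`f a - f b - m(a, b)` equals `|f a - g a| + |f b - g b|`.
-/

open Finset

/-- Membership of a point in the hypergrid `[n]^d = {1,…,n}^d`. -/
def inGrid (n d : ℕ) (x : Fin d → ℕ) : Prop := ∀ r : Fin d, 1 ≤ x r ∧ x r ≤ n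

/-- The quasimetric associated to a bounding family `(l, u)`. -/
def qm (d : ℕ) (l u : Fin d → ℕ → ℝ) (x y : Fin d → ℕ) : ℝ :=
  ∑ r : Fin d, ((∑ t ∈ Finset.Ico (y r) (x r), u r t) - ∑ t ∈ Finset.Ico (x r) (y r), l r t)

/-- `g` belongs to the bounded-derivative property `P(B)` for `(l,u)`. -/
def memP (n d : ℕ) (l u : Fin d → ℕ → ℝ) (g : (Fin d → ℕ) → ℝ) : Prop :=
  ∀ r : Fin d, ∀ x : Fin d → ℕ, inGrid n d x → x r + 1 ≤ n →
    l r (x r) ≤ g (Function.update x r (x r + 1)) - g x ∧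
    g (Function.update x r (x r + 1)) - g x ≤ u r (x r)

/-- The violation score of a pair `(x,y)` for the function `f`. -/
def vs (d : ℕ) (l u : Fin d → ℕ → ℝ) (f : (Fin d → ℕ) → ℝ) (x y : Fin d → ℕ) : ℝ :=
  max (f x - f y - qm d l u x y) (f y - f x - qm d l u y x)

/-- A matching of the violation graph `G_f`: a finite set of violated pairs of
grid points in which each point of the hypergrid occurs at most once. -/
def IsMatching (n d : ℕ) (l u : Fin d → ℕ → ℝ) (f : (Fin d → ℕ) → ℝ)
    (M : Finset ((Fin d → ℕ) × (Fin d → ℕ))) : Prop :=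
  (∀ p ∈ M, inGrid n d p.1 ∧ inGrid n d p.2 ∧ p.1 ≠ p.2 ∧ 0 < vs d l u f p.1 p.2) ∧
  (∀ p ∈ M, ∀ p' ∈ M, p ≠ p' →
    p.1 ≠ p'.1 ∧ p.1 ≠ p'.2 ∧ p.2 ≠ p'.1 ∧ p.2 ≠ p'.2)

open Filter Topology

theorem List.exists_nodup_isChain_cons {α : Type*} {r : α → α → Prop} {a b : α}
    (h : Relation.ReflTransGen r a b) :
    ∃ L : List α, (a :: L).IsChain r ∧ (a :: L).getLast (List.cons_ne_nil _ _) = b ∧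
      (a :: L).Nodup := by
  induction h using Relation.ReflTransGen.head_induction_on with
  | refl => exact ⟨[], .singleton _, rfl, List.nodup_singleton _⟩
  | @head a c hac _ ih =>
    obtain ⟨L, hchain, hlast, hnodup⟩ := ih
    by_cases ha : a ∈ c :: L
    · -- `a` recurs on the chain: restart it there
      obtain ⟨s, t, hst⟩ := List.append_of_mem ha
      refine ⟨t, ?_, ?_, ?_⟩
      · exact hchain.suffix ⟨s, hst.symm⟩
      · simp_all [List.getLast_append_of_ne_nil]
      · exact hnodup.sublist (hst ▸ List.sublist_append_right s _)
    · exact ⟨c :: L, .cons_cons hac hchain, by simpa using hlast, List.nodup_cons.2 ⟨ha, hnodup⟩⟩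

section UnitFlow

variable {V : Type*} [DecidableEq V]

def unitFlow (a b : V) : V → V → ℕ := fun p q => if p = a ∧ q = b then 1 else 0

lemma unitFlow_le {φ : V → V → ℕ} {a b : V} (h : 0 < φ a b) : unitFlow a b ≤ φ := by
  intro p q
  simp only [unitFlow]
  split_ifs with hpq
  · obtain ⟨rfl, rfl⟩ := hpq
    exact h
  · exact Nat.zero_le _

end UnitFlow

section Flow

variable {V : Type*} [Fintype V]

def netFlow (φ : V → V → ℕ) (x : V) : ℤ := ∑ y, (φ x y : ℤ) - ∑ y, (φ y x : ℤ)

def totalFlow (φ : V → V → ℕ) : ℕ := ∑ p, ∑ q, φ p q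

lemma netFlow_add (φ ψ : V → V → ℕ) (x : V) :
    netFlow (φ + ψ) x = netFlow φ x + netFlow ψ x := by
  simp only [netFlow, Pi.add_apply, Nat.cast_add, sum_add_distrib]
  ring

lemma netFlow_zero (x : V) : netFlow (0 : V → V → ℕ) x = 0 := by
  simp [netFlow]

lemma netFlow_transpose (φ : V → V → ℕ) (x : V) :
    netFlow (fun p q => φ q p) x = -netFlow φ x := by
  simp only [netFlow]
  ring

lemma totalFlow_add (φ ψ : V → V → ℕ) : totalFlow (φ + ψ) = totalFlow φ + totalFlow ψ := by
  simp only [totalFlow, Pi.add_apply, sum_add_distrib]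

lemma sum_netFlow_eq_zero {φ : V → V → ℕ} {C : Finset V}
    (hC : ∀ x ∈ C, ∀ y ∉ C, φ x y = 0 ∧ φ y x = 0) : ∑ x ∈ C, netFlow φ x = 0 := by
  have hrestrict : ∀ x ∈ C, netFlow φ x = ∑ y ∈ C, (φ x y : ℤ) - ∑ y ∈ C, (φ y x : ℤ) := by
    intro x hx
    rw [netFlow, ← sum_subset (subset_univ C) (fun y _ hy => by simp [(hC x hx y hy).1]),
      ← sum_subset (subset_univ C) (fun y _ hy => by simp [(hC x hx y hy).2])]
  rw [sum_congr rfl hrestrict, sum_sub_distrib, sum_comm, sub_self]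

variable [DecidableEq V]

lemma netFlow_unitFlow (a b x : V) :
    netFlow (unitFlow a b) x = (if x = a then 1 else 0) - (if x = b then 1 else 0) := by
  simp [netFlow, unitFlow, ite_and]

lemma totalFlow_unitFlow (a b : V) : totalFlow (unitFlow a b) = 1 := by
  simp [totalFlow, unitFlow, ite_and]

lemma exists_push (A : V → V → Prop) {φ : V → V → ℕ} {a c : V} (hac : A a c ∨ 0 < φ c a) :
    ∃ ψ : V → V → ℕ, (∀ p q, 0 < ψ p q → A p q ∨ 0 < φ p q) ∧
      (∀ p q, p ≠ a → q ≠ a → ψ p q = φ p q) ∧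
      ∀ x, netFlow ψ x = netFlow φ x + (if x = a then 1 else 0) - (if x = c then 1 else 0) := by
  rcases hac with hA | hpos
  · refine ⟨φ + unitFlow a c, fun p q hpq => ?_, fun p q hp _ => ?_, fun x => ?_⟩
    · by_cases h : p = a ∧ q = c
      · exact .inl (h.1 ▸ h.2 ▸ hA)
      · exact .inr (by simpa [unitFlow, h] using hpq)
    · simp [unitFlow, hp]
    · rw [netFlow_add, netFlow_unitFlow]; ring
  · obtain ⟨ψ, rfl⟩ := exists_add_of_le (unitFlow_le hpos)
    refine ⟨ψ, fun p q hpq => .inr (by simp only [Pi.add_apply]; omega),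
      fun p q _ hq => by simp [unitFlow, hq], fun x => ?_⟩
    rw [netFlow_add, netFlow_unitFlow]; ring

/-- The path is simple, so that no backward push overdraws an arc. -/
lemma exists_augment (A : V → V → Prop) :
    ∀ (L : List V) (φ : V → V → ℕ) (a b : V),
      (a :: L).IsChain (fun p q => A p q ∨ 0 < φ q p) → (a :: L).Nodup →
      (a :: L).getLast (List.cons_ne_nil _ _) = b →
      ∃ ψ : V → V → ℕ, (∀ p q, 0 < ψ p q → A p q ∨ 0 < φ p q) ∧
        ∀ x, netFlow ψ x = netFlow φ x + (if x = a then 1 else 0) - (if x = b then 1 else 0) := by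
  intro L
  induction L with
  | nil =>
    intro φ a b _ _ hlast
    obtain rfl : a = b := by simpa using hlast
    exact ⟨φ, fun p q h => .inr h, fun x => by ring⟩
  | cons c L ih =>
    intro φ a b hchain hnodup hlast
    rw [List.isChain_cons_cons] at hchain
    obtain ⟨ha, hnodup⟩ := List.nodup_cons.1 hnodup
    obtain ⟨φ₁, hsupp₁, hlocal₁, hnet₁⟩ := exists_push A hchain.1
    have hchain₁ : (c :: L).IsChain (fun p q => A p q ∨ 0 < φ₁ q p) :=
      hchain.2.imp_of_mem_imp fun p q hp hq hpq => by
        rwa [hlocal₁ q p (ne_of_mem_of_not_mem hq ha) (ne_of_mem_of_not_mem hp ha)]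
    obtain ⟨ψ, hsupp, hnet⟩ := ih φ₁ c b hchain₁ hnodup (by simpa using hlast)
    refine ⟨ψ, fun p q hpq => (hsupp p q hpq).elim .inl (hsupp₁ p q), fun x => ?_⟩
    rw [hnet, hnet₁]; ring

end Flow

lemma exists_pos_forall_le {ι : Type*} [Finite ι] {p : ι → Prop} {c : ι → ℝ}
    (hc : ∀ i, p i → 0 < c i) : ∃ t, 0 < t ∧ ∀ i, p i → t ≤ c i := by
  have hev : ∀ᶠ t in 𝓝[>] (0 : ℝ), ∀ i, p i → t ≤ c i := Filter.eventually_all.2 fun i => by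
    by_cases hi : p i
    · filter_upwards [nhdsWithin_le_nhds (eventually_le_nhds (hc i hi))] with t ht _ using ht
    · exact .of_forall fun t h => absurd h hi
  obtain ⟨t, ht, hpos⟩ := (hev.and self_mem_nhdsWithin).exists
  exact ⟨t, hpos, ht⟩

section BestApprox

variable {V : Type*} {m : V → V → ℝ} {f g : V → ℝ}

def IsQuasiLipschitz (m : V → V → ℝ) (g : V → ℝ) : Prop := ∀ x y, g x - g y ≤ m x y

lemma exists_isQuasiLipschitz (tri : ∀ x y z, m x z ≤ m x y + m y z) :
    ∃ h, IsQuasiLipschitz m h := by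
  rcases isEmpty_or_nonempty V with _ | ⟨⟨x₀⟩⟩
  · exact ⟨0, fun x => isEmptyElim x⟩
  · exact ⟨(m · x₀), fun x y => by linarith [tri x y x₀]⟩

variable [Fintype V]

def IsBestApprox (m : V → V → ℝ) (f g : V → ℝ) : Prop :=
  IsQuasiLipschitz m g ∧ ∀ h, IsQuasiLipschitz m h → ∑ x, |f x - g x| ≤ ∑ x, |f x - h x|

lemma exists_isBestApprox (tri : ∀ x y z, m x z ≤ m x y + m y z) (f : V → ℝ) :
    ∃ g, IsBestApprox m f g := by
  obtain ⟨h₀, hh₀⟩ := exists_isQuasiLipschitz tri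
  set cost : (V → ℝ) → ℝ := fun h => ∑ x, |f x - h x|
  have hcont : Continuous cost := by fun_prop
  set K : Set (V → ℝ) := {h | IsQuasiLipschitz m h ∧ cost h ≤ cost h₀}
  have hK : IsCompact K := by
    refine (isCompact_univ_pi fun x => isCompact_Icc (a := f x - cost h₀) (b := f x + cost h₀))
      |>.of_isClosed_subset ?_ fun h hh x _ => ?_
    · refine .inter ?_ (isClosed_le hcont continuous_const)
      have hLip : {h : V → ℝ | IsQuasiLipschitz m h} = ⋂ x, ⋂ y, {h | h x - h y ≤ m x y} := by
        ext h
        simp [IsQuasiLipschitz]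
      show IsClosed {h : V → ℝ | IsQuasiLipschitz m h}
      rw [hLip]
      exact isClosed_iInter fun x => isClosed_iInter fun y =>
        isClosed_le (by fun_prop) continuous_const
    · have hx : |f x - h x| ≤ cost h₀ :=
        (single_le_sum (f := fun y => |f y - h y|) (fun _ _ => abs_nonneg _) (mem_univ x)).trans
          hh.2
      constructor <;> linarith [abs_le.1 hx]
  obtain ⟨g, hgK, hmin⟩ := hK.exists_isMinOn ⟨h₀, hh₀, le_rfl⟩ hcont.continuousOn
  refine ⟨g, hgK.1, fun h hh => ?_⟩
  by_cases hc : cost h ≤ cost h₀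
  · exact hmin ⟨hh, hc⟩
  · exact hgK.2.trans (not_le.1 hc).le

/-- Raising `g` by a small `t` on `C` keeps it quasi-Lipschitz, and changes its cost by `-t` at
each point of `C` with `g < f` and by `t` at each other point of `C`. -/
lemma IsBestApprox.card_lt_le_card_ge [DecidableEq V] (hg : IsBestApprox m f g) {C : Finset V}
    (hC : ∀ x ∈ C, ∀ y, g x - g y = m x y → y ∈ C) :
    #{x ∈ C | g x < f x} ≤ #{x ∈ C | f x ≤ g x} := by
  obtain ⟨t₁, ht₁, hgap⟩ := exists_pos_forall_le (p := fun q : V × V => q.1 ∈ C ∧ q.2 ∉ C)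
    (c := fun q => m q.1 q.2 - (g q.1 - g q.2)) fun q hq =>
      sub_pos.2 ((hg.1 q.1 q.2).lt_of_ne fun e => hq.2 (hC q.1 hq.1 q.2 e))
  obtain ⟨t₂, ht₂, hexcess⟩ := exists_pos_forall_le (p := fun x => x ∈ C ∧ g x < f x)
    (c := fun x => f x - g x) fun x hx => sub_pos.2 hx.2
  set t := min t₁ t₂
  have ht : 0 < t := lt_min ht₁ ht₂
  set g' : V → ℝ := fun x => if x ∈ C then g x + t else g x
  have hg' : IsQuasiLipschitz m g' := by
    intro x y
    have := hg.1 x y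
    by_cases hx : x ∈ C <;> by_cases hy : y ∈ C <;> simp only [g', hx, hy, if_true, if_false]
    · linarith
    · linarith [hgap (x, y) ⟨hx, hy⟩, min_le_left t₁ t₂]
    · linarith
    · linarith
  have hpoint : ∀ x, |f x - g' x| =
      |f x - g x| + if x ∈ C then (if g x < f x then -t else t) else 0 := by
    intro x
    by_cases hx : x ∈ C
    · by_cases hfx : g x < f x
      · simp only [g', hx, hfx, if_true]
        have := hexcess x ⟨hx, hfx⟩
        rw [abs_of_nonneg (by linarith [min_le_right t₁ t₂]), abs_of_pos (by linarith)]
        ring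
      · simp only [g', hx, hfx, if_true, if_false]
        rw [abs_of_nonpos (by linarith), abs_of_nonpos (by linarith)]
        ring
    · simp [g', hx]
  have hcost := hg.2 g' hg'
  rw [sum_congr rfl fun x _ => hpoint x, sum_add_distrib, sum_ite_mem_eq, sum_ite, sum_const,
    sum_const] at hcost
  simp only [not_lt, nsmul_eq_mul] at hcost
  have : (#{x ∈ C | g x < f x} : ℝ) * t ≤ #{x ∈ C | f x ≤ g x} * t := by linarith
  exact_mod_cast le_of_mul_le_mul_right this ht

lemma IsBestApprox.neg (hg : IsBestApprox m f g) : IsBestApprox (fun x y => m y x) (-f) (-g) := by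
  refine ⟨fun x y => by simpa using by linarith [hg.1 y x], fun h hh => ?_⟩
  have := hg.2 (-h) fun x y => by simp only [Pi.neg_apply]; linarith [hh y x]
  have e : ∀ a b : ℝ, |-a - b| = |a - -b| := fun a b => by rw [← abs_neg]; ring_nf
  simpa only [Pi.neg_apply, e, neg_neg] using this

end BestApprox

section AdmissibleFlow

variable {V : Type*} [Fintype V] {m : V → V → ℝ} {f g : V → ℝ} {φ : V → V → ℕ}

structure IsAdmissibleFlow (m : V → V → ℝ) (f g : V → ℝ) (φ : V → V → ℕ) : Prop where
  tight : ∀ a b, 0 < φ a b → g a - g b = m a b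
  abs_netFlow_le : ∀ x, |netFlow φ x| ≤ 1
  netFlow_nonneg : ∀ x, g x < f x → 0 ≤ netFlow φ x
  netFlow_nonpos : ∀ x, f x < g x → netFlow φ x ≤ 0

noncomputable def flowScore (f g : V → ℝ) (φ : V → V → ℕ) : ℤ :=
  ∑ x, (SignType.sign (f x - g x) : ℤ) * netFlow φ x

lemma isAdmissibleFlow_zero : IsAdmissibleFlow m f g 0 where
  tight a b h := absurd h (lt_irrefl 0)
  abs_netFlow_le x := by simp [netFlow_zero]
  netFlow_nonneg x _ := by simp [netFlow_zero]
  netFlow_nonpos x _ := by simp [netFlow_zero]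

lemma IsAdmissibleFlow.flowScore_le (hφ : IsAdmissibleFlow m f g φ) :
    flowScore f g φ ≤ Fintype.card V := by
  rw [Fintype.card_eq_sum_ones, Nat.cast_sum, Nat.cast_one]
  refine sum_le_sum fun x _ => (le_abs_self _).trans ?_
  rw [abs_mul]
  exact mul_le_one₀ (by rcases SignType.sign (f x - g x) with _ | _ | _ <;> simp)
    (abs_nonneg _) (hφ.abs_netFlow_le x)

lemma IsAdmissibleFlow.transpose (hφ : IsAdmissibleFlow m f g φ) :
    IsAdmissibleFlow (fun x y => m y x) (-f) (-g) (fun p q => φ q p) where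
  tight a b h := by simp only [Pi.neg_apply]; linarith [hφ.tight b a h]
  abs_netFlow_le x := by rw [netFlow_transpose, abs_neg]; exact hφ.abs_netFlow_le x
  netFlow_nonneg x h := by
    rw [netFlow_transpose, neg_nonneg]; exact hφ.netFlow_nonpos x (by simpa using h)
  netFlow_nonpos x h := by
    rw [netFlow_transpose, neg_nonpos]; exact hφ.netFlow_nonneg x (by simpa using h)

lemma flowScore_transpose : flowScore (-f) (-g) (fun p q => φ q p) = flowScore f g φ := by
  refine sum_congr rfl fun x _ => ?_
  rw [netFlow_transpose, Pi.neg_apply, Pi.neg_apply, neg_sub_neg, ← neg_sub, Left.sign_neg,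
    SignType.coe_neg]
  ring

lemma exists_isAdmissibleFlow_forall_flowScore_le (m : V → V → ℝ) (f g : V → ℝ) :
    ∃ φ, IsAdmissibleFlow m f g φ ∧
      ∀ ψ, IsAdmissibleFlow m f g ψ → flowScore f g ψ ≤ flowScore f g φ := by
  obtain ⟨s, ⟨φ, hφ, rfl⟩, hmax⟩ := Int.exists_greatest_of_bdd
    (P := fun s => ∃ φ, IsAdmissibleFlow m f g φ ∧ flowScore f g φ = s)
    ⟨Fintype.card V, by rintro _ ⟨φ, hφ, rfl⟩; exact hφ.flowScore_le⟩
    ⟨_, 0, isAdmissibleFlow_zero, rfl⟩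
  exact ⟨φ, hφ, fun ψ hψ => hmax _ ⟨ψ, hψ, rfl⟩⟩

variable [DecidableEq V]

lemma flowScore_eq_of_netFlow_eq {ψ : V → V → ℕ} {a b : V}
    (h : ∀ x, netFlow ψ x = netFlow φ x + (if x = a then 1 else 0) - (if x = b then 1 else 0)) :
    flowScore f g ψ = flowScore f g φ + SignType.sign (f a - g a) - SignType.sign (f b - g b) := by
  simp only [flowScore, h, mul_sub, mul_add, sum_add_distrib, sum_sub_distrib, mul_ite, mul_one,
    mul_zero, sum_ite_eq', mem_univ, if_true]

def ResidualArc (m : V → V → ℝ) (g : V → ℝ) (φ : V → V → ℕ) (p q : V) : Prop :=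
  g p - g q = m p q ∨ 0 < φ q p

lemma IsAdmissibleFlow.exists_flowScore_lt (hφ : IsAdmissibleFlow m f g φ) {v w : V}
    (hv : g v < f v) (hv₀ : netFlow φ v = 0) (hw : f w ≤ g w) (hw₀ : 0 ≤ netFlow φ w)
    (hvw : Relation.ReflTransGen (ResidualArc m g φ) v w) :
    ∃ ψ, IsAdmissibleFlow m f g ψ ∧ flowScore f g φ < flowScore f g ψ := by
  have hwv : w ≠ v := by rintro rfl; linarith
  obtain ⟨L, hchain, hlast, hnodup⟩ := List.exists_nodup_isChain_cons hvw
  obtain ⟨ψ, hsupp, hnet⟩ :=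
    exists_augment (fun p q => g p - g q = m p q) L φ v w hchain hnodup hlast
  have hψ : ∀ x, x ≠ v → x ≠ w → netFlow ψ x = netFlow φ x := fun x h₁ h₂ => by
    simp [hnet, h₁, h₂]
  have hψv : netFlow ψ v = 1 := by simp [hnet, hv₀, hwv.symm]
  have hψw : netFlow ψ w = netFlow φ w - 1 := by simp [hnet, hwv]
  refine ⟨ψ, ⟨fun a b h => (hsupp a b h).elim id (hφ.tight a b), fun x => ?_, fun x hx => ?_,
    fun x hx => ?_⟩, ?_⟩
  · have := abs_le.1 (hφ.abs_netFlow_le x)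
    by_cases h₁ : x = v
    · subst h₁; simp [hψv]
    by_cases h₂ : x = w
    · subst h₂; rw [hψw, abs_le]; constructor <;> linarith
    · rw [hψ x h₁ h₂]; exact hφ.abs_netFlow_le x
  · by_cases h₁ : x = v
    · subst h₁; simp [hψv]
    by_cases h₂ : x = w
    · subst h₂; linarith
    · rw [hψ x h₁ h₂]; exact hφ.netFlow_nonneg x hx
  · by_cases h₁ : x = v
    · subst h₁; linarith
    by_cases h₂ : x = w
    · subst h₂; rw [hψw]; linarith [hφ.netFlow_nonpos x hx]
    · rw [hψ x h₁ h₂]; exact hφ.netFlow_nonpos x hx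
  · rw [flowScore_eq_of_netFlow_eq hnet, sign_pos (sub_pos.2 hv)]
    have : (SignType.sign (f w - g w) : ℤ) ≤ 0 := by
      rcases hw.lt_or_eq with h | h
      · simp [sign_neg (sub_neg.2 h)]
      · simp [h]
    simp only [SignType.coe_one]
    linarith

/-- Without such a `w`, no flow would cross the set `C` of points reachable from `v`, so `C` would
have more points with `g < f` than with `f ≤ g`, and raising `g` on `C` would lower its cost. -/
lemma IsBestApprox.exists_residual_path (hg : IsBestApprox m f g) (hφ : IsAdmissibleFlow m f g φ)
    {v : V} (hv : g v < f v) (hv₀ : netFlow φ v = 0) :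
    ∃ w, Relation.ReflTransGen (ResidualArc m g φ) v w ∧ f w ≤ g w ∧ 0 ≤ netFlow φ w := by
  classical
  by_contra! H
  set C : Finset V := {w | Relation.ReflTransGen (ResidualArc m g φ) v w}
  have hvC : v ∈ C := by simp [C, Relation.ReflTransGen.refl]
  have hclosed : ∀ x ∈ C, ∀ y, ResidualArc m g φ x y → y ∈ C := fun x hx y hxy => by
    simp only [C, mem_filter, mem_univ, true_and] at hx ⊢
    exact hx.tail hxy
  have hcut : ∑ x ∈ C, netFlow φ x = 0 := sum_netFlow_eq_zero fun x hx y hy => by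
    refine ⟨Nat.eq_zero_of_not_pos fun h => hy (hclosed x hx y (.inl (hφ.tight x y h))),
      Nat.eq_zero_of_not_pos fun h => hy (hclosed x hx y (.inr h))⟩
  have hN : ∑ x ∈ C with f x ≤ g x, netFlow φ x = -#{x ∈ C | f x ≤ g x} := by
    have : ∀ x ∈ C.filter (fun x => f x ≤ g x), netFlow φ x = -1 := fun x hx => by
      rw [mem_filter] at hx
      have := H x (by simpa [C] using hx.1) hx.2
      linarith [(abs_le.1 (hφ.abs_netFlow_le x)).1]
    simp [sum_congr rfl this]
  have hP : ∑ x ∈ C with g x < f x, netFlow φ x ≤ #{x ∈ C | g x < f x} - 1 := by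
    have hvP : v ∈ C.filter (fun x => g x < f x) := mem_filter.2 ⟨hvC, hv⟩
    rw [← add_sum_erase _ _ hvP, hv₀, zero_add, ← card_erase_add_one hvP, Nat.cast_add,
      Nat.cast_one, add_sub_cancel_right]
    simpa using sum_le_card_nsmul _ _ 1 fun x _ => (abs_le.1 (hφ.abs_netFlow_le x)).2
  have hcard := hg.card_lt_le_card_ge fun x hx y hxy => hclosed x hx y (.inl hxy)
  rw [← sum_filter_add_sum_filter_not C (fun x => g x < f x)] at hcut
  simp only [not_lt] at hcut
  omega

end AdmissibleFlow

section Saturation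

variable {V : Type*} [Fintype V] [DecidableEq V] {m : V → V → ℝ} {f g : V → ℝ}

lemma IsBestApprox.netFlow_eq_one (hg : IsBestApprox m f g) {φ : V → V → ℕ}
    (hφ : IsAdmissibleFlow m f g φ)
    (hmax : ∀ ψ, IsAdmissibleFlow m f g ψ → flowScore f g ψ ≤ flowScore f g φ) {v : V}
    (hv : g v < f v) :
    netFlow φ v = 1 := by
  by_contra hne
  have hv₀ : netFlow φ v = 0 := by
    have := abs_le.1 (hφ.abs_netFlow_le v)
    have := hφ.netFlow_nonneg v hv
    omega
  obtain ⟨w, hvw, hw, hw₀⟩ := hg.exists_residual_path hφ hv hv₀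
  obtain ⟨ψ, hψ, hlt⟩ := hφ.exists_flowScore_lt hv hv₀ hw hw₀ hvw
  exact (hmax ψ hψ).not_gt hlt

lemma IsBestApprox.exists_saturating_flow (hg : IsBestApprox m f g) :
    ∃ φ, IsAdmissibleFlow m f g φ ∧ (∀ x, g x < f x → netFlow φ x = 1) ∧
      ∀ x, f x < g x → netFlow φ x = -1 := by
  obtain ⟨φ, hφ, hmax⟩ := exists_isAdmissibleFlow_forall_flowScore_le m f g
  refine ⟨φ, hφ, fun x hx => hg.netFlow_eq_one hφ hmax hx, fun x hx => ?_⟩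
  -- the sinks of `φ` are the sources of the reversed flow for `-f` and `-g`
  have hmax_rev : ∀ ψ, IsAdmissibleFlow (fun x y => m y x) (-f) (-g) ψ →
      flowScore (-f) (-g) ψ ≤ flowScore (-f) (-g) (fun p q => φ q p) := fun ψ hψ =>
    calc flowScore (-f) (-g) ψ = flowScore f g (fun p q => ψ q p) := flowScore_transpose
      _ ≤ flowScore f g φ := hmax _ (by simpa only [neg_neg] using hψ.transpose)
      _ = flowScore (-f) (-g) (fun p q => φ q p) := flowScore_transpose.symm
  have := hg.neg.netFlow_eq_one hφ.transpose hmax_rev (v := x) (by simpa using hx)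
  rw [netFlow_transpose] at this
  omega

end Saturation

section DisjointPairs

variable {α β : Type*}

def IsDisjointPairs (M : Finset (α × α)) : Prop :=
  (∀ p ∈ M, p.1 ≠ p.2) ∧
    ∀ p ∈ M, ∀ q ∈ M, p ≠ q → p.1 ≠ q.1 ∧ p.1 ≠ q.2 ∧ p.2 ≠ q.1 ∧ p.2 ≠ q.2

lemma IsDisjointPairs.mono {M N : Finset (α × α)} (hN : IsDisjointPairs N) (hMN : M ⊆ N) :
    IsDisjointPairs M :=
  ⟨fun p hp => hN.1 p (hMN hp), fun p hp q hq => hN.2 p (hMN hp) q (hMN hq)⟩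

lemma IsDisjointPairs.map {M : Finset (α × α)} (hM : IsDisjointPairs M) (e : α ↪ β) :
    IsDisjointPairs (M.map (e.prodMap e)) := by
  refine ⟨?_, ?_⟩
  · rintro _ hp
    obtain ⟨p, hpM, rfl⟩ := Finset.mem_map.1 hp
    exact fun h => hM.1 p hpM (e.injective h)
  · rintro _ hp _ hq hpq
    obtain ⟨p, hpM, rfl⟩ := Finset.mem_map.1 hp
    obtain ⟨q, hqM, rfl⟩ := Finset.mem_map.1 hq
    obtain ⟨h₁, h₂, h₃, h₄⟩ := hM.2 p hpM q hqM fun h => hpq (h ▸ rfl)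
    exact ⟨e.injective.ne h₁, e.injective.ne h₂, e.injective.ne h₃, e.injective.ne h₄⟩

lemma IsDisjointPairs.sum_add [DecidableEq α] [AddCommMonoid β] {M : Finset (α × α)}
    (hM : IsDisjointPairs M) (h : α → β) :
    ∑ p ∈ M, (h p.1 + h p.2) = ∑ x ∈ M.biUnion (fun p => {p.1, p.2}), h x := by
  rw [sum_biUnion]
  · exact sum_congr rfl fun p hp => (sum_pair (hM.1 p hp)).symm
  · intro p hp q hq hpq
    obtain ⟨h₁, h₂, h₃, h₄⟩ := hM.2 p hp q hq hpq
    simp only [Function.onFun, disjoint_insert_left, disjoint_insert_right, disjoint_singleton,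
      mem_insert, mem_singleton]
    tauto

end DisjointPairs

section BipartiteFlow

variable {V : Type*} {φ ψ : V → V → ℕ}

def IsBipartiteFlow (ψ : V → V → ℕ) : Prop := ∀ x, (∀ y, ψ y x = 0) ∨ ∀ y, ψ x y = 0

lemma IsBipartiteFlow.transpose (hψ : IsBipartiteFlow ψ) : IsBipartiteFlow fun p q => ψ q p :=
  fun x => (hψ x).symm

lemma IsBipartiteFlow.eq_zero_of_pos (hψ : IsBipartiteFlow ψ) {a b : V} (hab : 0 < ψ a b)
    (y : V) : ψ y a = 0 :=
  (hψ a).resolve_right (fun h => hab.ne' (h b)) y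

variable [Fintype V]

lemma IsBipartiteFlow.netFlow_eq_sum (hψ : IsBipartiteFlow ψ) {a b : V} (hab : 0 < ψ a b) :
    netFlow ψ a = ∑ y, (ψ a y : ℤ) := by
  simp [netFlow, hψ.eq_zero_of_pos hab]

lemma IsBipartiteFlow.netFlow_eq_one (hψ : IsBipartiteFlow ψ) (hle : ∀ x, netFlow ψ x ≤ 1)
    {a b : V} (hab : 0 < ψ a b) : netFlow ψ a = 1 := by
  have h := hle a
  rw [hψ.netFlow_eq_sum hab] at h ⊢
  have : (ψ a b : ℤ) ≤ ∑ y, (ψ a y : ℤ) :=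
    single_le_sum (f := fun y => (ψ a y : ℤ)) (fun _ _ => by positivity) (mem_univ b)
  omega

lemma IsBipartiteFlow.eq_of_pos [DecidableEq V] (hψ : IsBipartiteFlow ψ)
    (hle : ∀ x, netFlow ψ x ≤ 1) {a b c : V} (hab : 0 < ψ a b) (hac : 0 < ψ a c) : b = c := by
  by_contra hbc
  have h := hle a
  rw [hψ.netFlow_eq_sum hab] at h
  have : (ψ a b : ℤ) + ψ a c ≤ ∑ y, (ψ a y : ℤ) := by
    rw [← sum_pair (f := fun y => (ψ a y : ℤ)) hbc]
    exact sum_le_sum_of_subset_of_nonneg (subset_univ _) fun _ _ _ => by positivity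
  omega

lemma IsBipartiteFlow.isDisjointPairs [DecidableEq V] (hψ : IsBipartiteFlow ψ)
    (hbd : ∀ x, |netFlow ψ x| ≤ 1) : IsDisjointPairs {p : V × V | 0 < ψ p.1 p.2} := by
  have hle : ∀ x, netFlow ψ x ≤ 1 := fun x => (abs_le.1 (hbd x)).2
  have hle' : ∀ x, netFlow (fun p q => ψ q p) x ≤ 1 := fun x => by
    rw [netFlow_transpose]; linarith [(abs_le.1 (hbd x)).1]
  simp only [IsDisjointPairs, mem_filter, mem_univ, true_and]
  refine ⟨fun p hp h => ?_, fun p hp q hq hpq => ⟨fun h => hpq ?_, fun h => ?_, fun h => ?_,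
    fun h => hpq ?_⟩⟩
  · have := hψ.eq_zero_of_pos hp p.2
    rw [h] at hp this
    exact hp.ne' this
  · exact Prod.ext h (hψ.eq_of_pos hle hp (h ▸ hq))
  · exact (h ▸ hq).ne' (hψ.eq_zero_of_pos hp q.1)
  · exact (h ▸ hp).ne' (hψ.eq_zero_of_pos hq p.1)
  · exact Prod.ext (hψ.transpose.eq_of_pos hle' (a := p.2) hp (h ▸ hq)) h

lemma exists_pos_of_netFlow_pos {x : V} (h : 0 < netFlow ψ x) : ∃ y, 0 < ψ x y := by
  by_contra! H
  have hout : ∑ y, (ψ x y : ℤ) = 0 := sum_eq_zero fun y _ => by simp [Nat.le_zero.1 (H y)]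
  rw [netFlow, hout, zero_sub, neg_pos] at h
  exact h.not_ge (sum_nonneg fun y _ => Nat.cast_nonneg _)

variable [DecidableEq V]

/-- Replacing one unit on `a → c → b` by one unit on `a → b`, or removing a loop at `c`. -/
lemma exists_shortcut {T : V → V → Prop} (hT : ∀ a b c, T a b → T b c → T a c)
    (hφ : ∀ a b, 0 < φ a b → T a b) {a b c : V} (hac : 0 < φ a c) (hcb : 0 < φ c b) :
    ∃ ψ : V → V → ℕ, (∀ a b, 0 < ψ a b → T a b) ∧ (∀ x, netFlow ψ x = netFlow φ x) ∧
      totalFlow ψ < totalFlow φ := by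
  by_cases hloop : a = c
  · subst hloop
    obtain ⟨ψ, rfl⟩ := exists_add_of_le (unitFlow_le hac)
    refine ⟨ψ, fun p q h => hφ p q (by simp only [Pi.add_apply]; omega), fun x => ?_, ?_⟩
    · simp [netFlow_add, netFlow_unitFlow]
    · simp [totalFlow_add, totalFlow_unitFlow]
  · have hle : unitFlow a c + unitFlow c b ≤ φ := by
      intro p q
      simp only [Pi.add_apply, unitFlow]
      split_ifs with h₁ h₂ h₂
      · exact absurd (h₁.1.symm.trans h₂.1) hloop
      · exact h₁.1 ▸ h₁.2 ▸ hac
      · exact h₂.1 ▸ h₂.2 ▸ hcb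
      · exact Nat.zero_le _
    obtain ⟨ψ, rfl⟩ := exists_add_of_le hle
    refine ⟨ψ + unitFlow a b, fun p q h => ?_, fun x => ?_, ?_⟩
    · by_cases hpq : p = a ∧ q = b
      · obtain ⟨rfl, rfl⟩ := hpq
        exact hT _ _ _ (hφ _ _ hac) (hφ _ _ hcb)
      · refine hφ p q ?_
        simp only [Pi.add_apply, unitFlow, hpq, if_false] at h ⊢
        omega
    · simp only [netFlow_add, netFlow_unitFlow]
      ring
    · simp only [totalFlow_add, totalFlow_unitFlow]
      omega

lemma exists_isBipartiteFlow {T : V → V → Prop} (hT : ∀ a b c, T a b → T b c → T a c)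
    (φ : V → V → ℕ) (hφ : ∀ a b, 0 < φ a b → T a b) :
    ∃ ψ : V → V → ℕ, (∀ a b, 0 < ψ a b → T a b) ∧ (∀ x, netFlow ψ x = netFlow φ x) ∧
      IsBipartiteFlow ψ := by
  induction hN : totalFlow φ using Nat.strong_induction_on generalizing φ with
  | _ N ih =>
  by_cases hbip : IsBipartiteFlow φ
  · exact ⟨φ, hφ, fun _ => rfl, hbip⟩
  simp only [IsBipartiteFlow, not_forall, not_or] at hbip
  obtain ⟨c, ⟨a, hac⟩, b, hcb⟩ := hbip
  obtain ⟨φ', hφ', hnet, htot⟩ :=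
    exists_shortcut hT hφ (Nat.pos_of_ne_zero hac) (Nat.pos_of_ne_zero hcb)
  obtain ⟨ψ, hψ, hnetψ, hbipψ⟩ := ih _ (hN ▸ htot) φ' hφ' rfl
  exact ⟨ψ, hψ, fun x => (hnetψ x).trans (hnet x), hbipψ⟩

end BipartiteFlow

lemma IsAdmissibleFlow.sub_sub_eq_abs_add_abs {V : Type*} [Fintype V] {m : V → V → ℝ}
    {f g : V → ℝ} {ψ : V → V → ℕ} (hψ : IsAdmissibleFlow m f g ψ) (hbip : IsBipartiteFlow ψ)
    {a b : V} (hab : 0 < ψ a b) : f a - f b - m a b = |f a - g a| + |f b - g b| := by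
  have ha : netFlow ψ a = 1 := hbip.netFlow_eq_one (fun x => (abs_le.1 (hψ.abs_netFlow_le x)).2) hab
  have hb : netFlow ψ b = -1 := by
    have := hbip.transpose.netFlow_eq_one (fun x => by
      rw [netFlow_transpose]; linarith [(abs_le.1 (hψ.abs_netFlow_le x)).1]) (a := b) hab
    rw [netFlow_transpose] at this
    omega
  have hga : g a ≤ f a := not_lt.1 fun h => by linarith [hψ.netFlow_nonpos _ h]
  have hgb : f b ≤ g b := not_lt.1 fun h => by linarith [hψ.netFlow_nonneg _ h]
  rw [abs_of_nonneg (sub_nonneg.2 hga), abs_of_nonpos (sub_nonpos.2 hgb)]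
  linarith [hψ.tight _ _ hab]

/-- Tight arcs compose by the triangle inequality, so a saturating flow can be shortcut to a
bipartite one, whose arcs then pair the points where `f ≠ g`. -/
theorem IsBestApprox.exists_isDisjointPairs {V : Type*} [Fintype V] [DecidableEq V]
    {m : V → V → ℝ} {f g : V → ℝ} (tri : ∀ x y z, m x z ≤ m x y + m y z)
    (hg : IsBestApprox m f g) :
    ∃ M : Finset (V × V), IsDisjointPairs M ∧ (∀ p ∈ M, 0 < f p.1 - f p.2 - m p.1 p.2) ∧
      ∑ x, |f x - g x| ≤ ∑ p ∈ M, (f p.1 - f p.2 - m p.1 p.2) := by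
  obtain ⟨φ, hφ, hsrc, hsnk⟩ := hg.exists_saturating_flow
  obtain ⟨ψ, htight, hnet, hbip⟩ := exists_isBipartiteFlow (T := fun a b => g a - g b = m a b)
    (fun a b c hab hbc => le_antisymm (hg.1 a c) (by linarith [tri a b c])) φ hφ.tight
  have hψ : IsAdmissibleFlow m f g ψ := ⟨htight, fun x => hnet x ▸ hφ.abs_netFlow_le x,
    fun x h => hnet x ▸ hφ.netFlow_nonneg x h, fun x h => hnet x ▸ hφ.netFlow_nonpos x h⟩
  set M := ({p | 0 < ψ p.1 p.2} : Finset (V × V))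
  have hM : IsDisjointPairs M := hbip.isDisjointPairs hψ.abs_netFlow_le
  have hval : ∀ p ∈ M, f p.1 - f p.2 - m p.1 p.2 = |f p.1 - g p.1| + |f p.2 - g p.2| :=
    fun p hp => hψ.sub_sub_eq_abs_add_abs hbip (by simpa [M] using hp)
  have hcover : ∀ x, f x ≠ g x → x ∈ M.biUnion fun p => {p.1, p.2} := by
    intro x hx
    simp only [mem_biUnion, M, mem_filter, mem_univ, true_and, mem_insert, mem_singleton]
    rcases hx.lt_or_gt with h | h
    · obtain ⟨y, hy⟩ := exists_pos_of_netFlow_pos (ψ := fun p q => ψ q p) (x := x)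
        (by rw [netFlow_transpose, hnet, hsnk x h]; norm_num)
      exact ⟨(y, x), hy, .inr rfl⟩
    · obtain ⟨y, hy⟩ := exists_pos_of_netFlow_pos (ψ := ψ) (x := x)
        (by rw [hnet, hsrc x h]; norm_num)
      exact ⟨(x, y), hy, .inl rfl⟩
  refine ⟨{p ∈ M | 0 < f p.1 - f p.2 - m p.1 p.2}, hM.mono (filter_subset _ _),
    fun p hp => (mem_filter.1 hp).2, ?_⟩
  rw [sum_filter_of_ne fun p hp hne => hne.symm.lt_of_le (by rw [hval p hp]; positivity)]
  apply le_of_eq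
  calc ∑ x, |f x - g x| = ∑ x ∈ M.biUnion fun p => {p.1, p.2}, |f x - g x| :=
        (sum_subset (subset_univ _) fun x _ hx =>
          by rw [abs_eq_zero, sub_eq_zero]; exact not_not.1 (mt (hcover x) hx)).symm
    _ = ∑ p ∈ M, (|f p.1 - g p.1| + |f p.2 - g p.2|) := (hM.sum_add _).symm
    _ = ∑ p ∈ M, (f p.1 - f p.2 - m p.1 p.2) := sum_congr rfl fun p hp => (hval p hp).symm

section Grid

def qmLine (l u : ℕ → ℝ) (a b : ℕ) : ℝ := ∑ t ∈ Ico b a, u t - ∑ t ∈ Ico a b, l t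

lemma qm_eq_sum_qmLine (d : ℕ) (l u : Fin d → ℕ → ℝ) (x y : Fin d → ℕ) :
    qm d l u x y = ∑ r, qmLine (l r) (u r) (x r) (y r) := rfl

section Line

variable {l u : ℕ → ℝ} {a b c : ℕ}

lemma qmLine_self (a : ℕ) : qmLine l u a a = 0 := by
  simp [qmLine]

lemma qmLine_succ_left (a : ℕ) : qmLine l u (a + 1) a = u a := by
  simp [qmLine]

lemma qmLine_succ_right (a : ℕ) : qmLine l u a (a + 1) = -l a := by
  simp [qmLine]

lemma qmLine_eq_max (hlu : ∀ t ∈ Ico (min a b) (max a b), l t ≤ u t) :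
    qmLine l u a b = max (∑ t ∈ range a, u t - ∑ t ∈ range b, u t)
      (∑ t ∈ range a, l t - ∑ t ∈ range b, l t) := by
  rcases le_total b a with hba | hab
  · have hle : ∑ t ∈ Ico b a, l t ≤ ∑ t ∈ Ico b a, u t :=
      sum_le_sum fun t ht => hlu t (by simpa [hba] using ht)
    rw [qmLine, Ico_eq_empty_of_le hba, sum_empty, sub_zero, sum_Ico_eq_sub _ hba] at *
    rw [sum_Ico_eq_sub _ hba] at hle
    exact (max_eq_left hle).symm
  · have hle : ∑ t ∈ Ico a b, l t ≤ ∑ t ∈ Ico a b, u t :=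
      sum_le_sum fun t ht => hlu t (by simpa [hab] using ht)
    rw [qmLine, Ico_eq_empty_of_le hab, sum_empty, zero_sub, sum_Ico_eq_sub _ hab] at *
    rw [sum_Ico_eq_sub _ hab] at hle
    rw [max_eq_right (by linarith)]
    ring

lemma qmLine_le_add {s e : ℕ} (hlu : ∀ t ∈ Ico s e, l t ≤ u t) (ha : a ∈ Icc s e)
    (hb : b ∈ Icc s e) (hc : c ∈ Icc s e) : qmLine l u a c ≤ qmLine l u a b + qmLine l u b c := by
  have hlu' : ∀ {a b}, a ∈ Icc s e → b ∈ Icc s e → ∀ t ∈ Ico (min a b) (max a b), l t ≤ u t :=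
    fun ha hb t ht => hlu t (by simp only [mem_Icc, mem_Ico] at ha hb ht ⊢; omega)
  rw [qmLine_eq_max (hlu' ha hc), qmLine_eq_max (hlu' ha hb), qmLine_eq_max (hlu' hb hc)]
  refine max_le ?_ ?_
  · rw [← sub_add_sub_cancel _ (∑ t ∈ range b, u t)]
    exact add_le_add (le_max_left _ _) (le_max_left _ _)
  · rw [← sub_add_sub_cancel _ (∑ t ∈ range b, l t)]
    exact add_le_add (le_max_right _ _) (le_max_right _ _)

lemma sub_le_qmLine {h : ℕ → ℝ}
    (hstep : ∀ t ∈ Ico (min a b) (max a b), l t ≤ h (t + 1) - h t ∧ h (t + 1) - h t ≤ u t) :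
    h a - h b ≤ qmLine l u a b := by
  rcases le_total b a with hba | hab
  · rw [qmLine, Ico_eq_empty_of_le hba, sum_empty, sub_zero, ← sum_Ico_sub h hba]
    exact sum_le_sum fun t ht => (hstep t (by simpa [hba] using ht)).2
  · rw [qmLine, Ico_eq_empty_of_le hab, sum_empty, zero_sub, ← neg_sub, ← sum_Ico_sub h hab,
      neg_le_neg_iff]
    exact sum_le_sum fun t ht => (hstep t (by simpa [hab] using ht)).1

end Line

variable {n d : ℕ} {l u : Fin d → ℕ → ℝ} {g : (Fin d → ℕ) → ℝ}

lemma mem_grid_iff {x : Fin d → ℕ} : x ∈ Icc (fun _ => 1) (fun _ => n) ↔ inGrid n d x := by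
  simp [inGrid, Pi.le_def, forall_and]

lemma inGrid_update {x : Fin d → ℕ} (hx : inGrid n d x) (r : Fin d) {a : ℕ} (ha : 1 ≤ a)
    (han : a ≤ n) : inGrid n d (Function.update x r a) := by
  intro s
  by_cases hs : s = r
  · subst hs; simpa using ⟨ha, han⟩
  · simpa [hs] using hx s

lemma qm_update_left (x : Fin d → ℕ) (r : Fin d) (a : ℕ) :
    qm d l u (Function.update x r a) x = qmLine (l r) (u r) a (x r) := by
  rw [qm_eq_sum_qmLine, Fintype.sum_eq_single r fun s hs => by simp [hs, qmLine_self]]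
  simp

lemma qm_update_right (x : Fin d → ℕ) (r : Fin d) (a : ℕ) :
    qm d l u x (Function.update x r a) = qmLine (l r) (u r) (x r) a := by
  rw [qm_eq_sum_qmLine, Fintype.sum_eq_single r fun s hs => by simp [hs, qmLine_self]]
  simp

lemma qm_le_add (hlu : ∀ r t, 1 ≤ t → t + 1 ≤ n → l r t ≤ u r t) {x y z : Fin d → ℕ}
    (hx : inGrid n d x) (hy : inGrid n d y) (hz : inGrid n d z) :
    qm d l u x z ≤ qm d l u x y + qm d l u y z := by
  simp only [qm_eq_sum_qmLine, ← sum_add_distrib]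
  exact sum_le_sum fun r _ => qmLine_le_add (s := 1) (e := n)
    (fun t ht => hlu r t (mem_Ico.1 ht).1 (mem_Ico.1 ht).2)
    (mem_Icc.2 (hx r)) (mem_Icc.2 (hy r)) (mem_Icc.2 (hz r))

lemma update_sub_le_of_memP (hg : memP n d l u g) {w : Fin d → ℕ} (hw : inGrid n d w) (r : Fin d)
    {a : ℕ} (ha : 1 ≤ a) (han : a ≤ n) :
    g (Function.update w r a) - g w ≤ qmLine (l r) (u r) a (w r) := by
  have := sub_le_qmLine (l := l r) (u := u r) (h := fun t => g (Function.update w r t))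
    (a := a) (b := w r) fun t ht => ?_
  · simpa using this
  have ht : 1 ≤ t ∧ t + 1 ≤ n := by
    simp only [mem_Ico] at ht
    have := hw r
    omega
  simpa using hg r _ (inGrid_update hw r ht.1 (by omega)) (by simpa using ht.2)

lemma sub_le_qm_of_memP (hg : memP n d l u g) {x y : Fin d → ℕ} (hx : inGrid n d x)
    (hy : inGrid n d y) : g x - g y ≤ qm d l u x y := by
  classical
  suffices ∀ S : Finset (Fin d),
      g (S.piecewise x y) - g y ≤ ∑ r ∈ S, qmLine (l r) (u r) (x r) (y r) by
    simpa [qm_eq_sum_qmLine] using this univ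
  intro S
  induction S using Finset.induction_on with
  | empty => simp
  | insert r S hr ih =>
    have hw : inGrid n d (S.piecewise x y) := fun s => by
      by_cases hs : s ∈ S <;> simp [hs, hx s, hy s]
    have := update_sub_le_of_memP hg hw r (hx r).1 (hx r).2
    rw [piecewise_eq_of_notMem _ _ _ hr] at this
    rw [piecewise_insert, sum_insert hr]
    linarith

lemma memP_of_sub_le_qm (h : ∀ x y, inGrid n d x → inGrid n d y → g x - g y ≤ qm d l u x y) :
    memP n d l u g := by
  intro r x hx hxr
  have hx' := inGrid_update hx r (by omega) hxr
  have h₁ := h _ _ hx' hx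
  have h₂ := h _ _ hx hx'
  rw [qm_update_left, qmLine_succ_left] at h₁
  rw [qm_update_right, qmLine_succ_right] at h₂
  constructor <;> linarith

lemma sum_vs_le_of_memP {f : (Fin d → ℕ) → ℝ} (hg : memP n d l u g)
    {M : Finset ((Fin d → ℕ) × (Fin d → ℕ))} (hM : IsMatching n d l u f M) :
    ∑ p ∈ M, vs d l u f p.1 p.2 ≤ ∑ x ∈ Icc (fun _ => 1) (fun _ => n), |f x - g x| := by
  classical
  have hpair : ∀ p ∈ M, vs d l u f p.1 p.2 ≤ |f p.1 - g p.1| + |f p.2 - g p.2| := by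
    intro p hp
    obtain ⟨h₁, h₂, -, -⟩ := hM.1 p hp
    have := sub_le_qm_of_memP hg h₁ h₂
    have := sub_le_qm_of_memP hg h₂ h₁
    refine max_le ?_ ?_ <;> linarith [le_abs_self (f p.1 - g p.1), neg_abs_le (f p.2 - g p.2),
      le_abs_self (f p.2 - g p.2), neg_abs_le (f p.1 - g p.1)]
  have hdisj : IsDisjointPairs M := ⟨fun p hp => (hM.1 p hp).2.2.1, hM.2⟩
  calc ∑ p ∈ M, vs d l u f p.1 p.2 ≤ ∑ p ∈ M, (|f p.1 - g p.1| + |f p.2 - g p.2|) :=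
        sum_le_sum hpair
    _ = ∑ x ∈ M.biUnion fun p => {p.1, p.2}, |f x - g x| := hdisj.sum_add fun x => |f x - g x|
    _ ≤ _ := by
      refine sum_le_sum_of_subset_of_nonneg (fun x hx => ?_) fun _ _ _ => abs_nonneg _
      simp only [mem_biUnion, mem_insert, mem_singleton] at hx
      obtain ⟨p, hp, rfl | rfl⟩ := hx
      · exact mem_grid_iff.2 (hM.1 p hp).1
      · exact mem_grid_iff.2 (hM.1 p hp).2.1

lemma exists_memP_sum_le (hlu : ∀ r t, 1 ≤ t → t + 1 ≤ n → l r t ≤ u r t)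
    (f : (Fin d → ℕ) → ℝ) :
    ∃ g, memP n d l u g ∧ ∃ M, IsMatching n d l u f M ∧
      ∑ x ∈ Icc (fun _ => 1) (fun _ => n), |f x - g x| ≤ ∑ p ∈ M, vs d l u f p.1 p.2 := by
  classical
  set G : Finset (Fin d → ℕ) := Icc (fun _ => 1) (fun _ => n)
  have tri : ∀ a b c : G, qm d l u a c ≤ qm d l u a b + qm d l u b c := fun a b c =>
    qm_le_add hlu (mem_grid_iff.1 a.2) (mem_grid_iff.1 b.2) (mem_grid_iff.1 c.2)
  obtain ⟨h, hh⟩ := exists_isBestApprox tri fun a => f a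
  obtain ⟨M, hM, hpos, hle⟩ := hh.exists_isDisjointPairs tri
  set g : (Fin d → ℕ) → ℝ := fun x => if hx : x ∈ G then h ⟨x, hx⟩ else 0
  have hgh : ∀ a : G, g a = h a := fun a => dif_pos a.2
  set e := Function.Embedding.subtype (· ∈ G)
  refine ⟨g, memP_of_sub_le_qm fun x y hx hy => ?_, M.map (e.prodMap e),
    ⟨fun p hp => ?_, (hM.map e).2⟩, ?_⟩
  · have := hh.1 ⟨x, mem_grid_iff.2 hx⟩ ⟨y, mem_grid_iff.2 hy⟩
    rwa [← hgh, ← hgh] at this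
  · obtain ⟨p, hpM, rfl⟩ := mem_map.1 hp
    exact ⟨mem_grid_iff.1 p.1.2, mem_grid_iff.1 p.2.2, (hM.map e).1 _ hp,
      (hpos p hpM).trans_le (le_max_left _ _)⟩
  · rw [sum_map, ← sum_coe_sort G]
    calc ∑ a : G, |f a - g a| = ∑ a : G, |f a - h a| := by simp only [hgh]
      _ ≤ ∑ p ∈ M, (f p.1 - f p.2 - qm d l u p.1 p.2) := hle
      _ ≤ _ := sum_le_sum fun p _ => le_max_left _ _

end Grid

theorem stmt9_general (n d : ℕ)
    (l u : Fin d → ℕ → ℝ)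
    (hlu : ∀ r : Fin d, ∀ t : ℕ, 1 ≤ t → t + 1 ≤ n → l r t < u r t)
    (f : (Fin d → ℕ) → ℝ) :
    sInf {s : ℝ | ∃ g : (Fin d → ℕ) → ℝ, memP n d l u g ∧
        s = ∑ x ∈ Finset.Icc (fun _ => 1) (fun _ => n), |f x - g x|}
      = sSup {s : ℝ | ∃ M : Finset ((Fin d → ℕ) × (Fin d → ℕ)),
          IsMatching n d l u f M ∧ s = ∑ p ∈ M, vs d l u f p.1 p.2} := by
  obtain ⟨g, hg, M, hM, hgM⟩ := exists_memP_sum_le (fun r t h₁ h₂ => (hlu r t h₁ h₂).le) f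
  apply le_antisymm
  · refine le_trans ?_ (hgM.trans (le_csSup ?_ ⟨M, hM, rfl⟩))
    · exact csInf_le ⟨0, by rintro _ ⟨g', -, rfl⟩; positivity⟩ ⟨g, hg, rfl⟩
    · exact ⟨_, by rintro _ ⟨M', hM', rfl⟩; exact sum_vs_le_of_memP hg hM'⟩
  · refine csSup_le ⟨_, M, hM, rfl⟩ fun _ ⟨M', hM', hs⟩ => le_csInf ⟨_, g, hg, rfl⟩ ?_
    rintro _ ⟨g', hg', rfl⟩
    rw [hs]
    exact sum_vs_le_of_memP hg' hM'

/-- the (unnormalized) `L_1`-distance of `f` to `P(B)` equals the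
maximum weight of a matching in the violation graph of `f`. -/
theorem stmt9 (n d : ℕ) (hn : 2 ≤ n) (hd : 1 ≤ d)
    (l u : Fin d → ℕ → ℝ)
    (hlu : ∀ r : Fin d, ∀ t : ℕ, 1 ≤ t → t + 1 ≤ n → l r t < u r t)
    (f : (Fin d → ℕ) → ℝ) :
    sInf {s : ℝ | ∃ g : (Fin d → ℕ) → ℝ, memP n d l u g ∧
        s = ∑ x ∈ Finset.Icc (fun _ => 1) (fun _ => n), |f x - g x|}
      = sSup {s : ℝ | ∃ M : Finset ((Fin d → ℕ) × (Fin d → ℕ)),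
          IsMatching n d l u f M ∧ s = ∑ p ∈ M, vs d l u f p.1 p.2} :=
  stmt9_general n d l u hlu f
end

section
/- Let g ∈ P(B) be a function attaining the minimum of Σ_{x∈[n]^d} |f(x) − g(x)| over P(B). Partition [n]^d into D_> = {x : f(x) > g(x)}, D_= = {x : f(x) = g(x)}, D_< = {x : f(x) < g(x)}. Let B_f be the bipartite graph with parts D_> ∪ D_= and D_< ∪ D_=, whose edges are the pairs (x,y) with x ∈ D_> ∪ D_=, y ∈ D_< ∪ D_=, x ≠ y, and g(x) − g(y) = m(x,y). Then B_f contains a matching that matches every vertex of D_> ∪ D_<. -/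
/-
Fix `S ⊆ D_>` and let `U` be the set of grid points `z` with `g s - g z = m(s, z)` for some `s ∈ S`.
Since `g x - g y ≤ m(x, y)` on `P(B)` and `m` satisfies the triangle inequality, tightness
propagates along tight lattice steps; hence no constraint of `P(B)` is tight across the boundary
of `U`, and `g + ε·1_U ∈ P(B)` for small `ε > 0`. Optimality of `g` then gives
`|U ∩ D_>| ≤ |U \ D_>|`, and `U \ D_>` lies in the neighbourhood of `S` in `B_f`: this is Hall's
condition for `D_>`. Negating `f`, `g` and the bounds swaps the two sides and gives Hall's
condition for `D_<`, and the two one-sided matchings are merged as in the Mendelsohn–Dulmage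
theorem.
-/

open Finset

open Filter Topology Function

def grid (n d : ℕ) : Finset (Fin d → ℕ) := Icc (fun _ => 1) (fun _ => n)

theorem mem_grid {n d : ℕ} {x : Fin d → ℕ} : x ∈ grid n d ↔ inGrid n d x := by
  simp only [grid, mem_Icc, Pi.le_def, inGrid, forall_and]

theorem inGrid_update_succ {n d : ℕ} {x : Fin d → ℕ} {r : Fin d} (hx : inGrid n d x)
    (hr : x r + 1 ≤ n) : inGrid n d (update x r (x r + 1)) := by
  intro s
  rcases eq_or_ne s r with rfl | hs
  · rw [update_self]
    exact ⟨by omega, hr⟩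
  · rw [update_of_ne hs]
    exact hx s

def qm1 (l u : ℕ → ℝ) (a b : ℕ) : ℝ := ∑ t ∈ Ico b a, u t - ∑ t ∈ Ico a b, l t

section qm1

variable {l u : ℕ → ℝ}

theorem qm1_self (a : ℕ) : qm1 l u a a = 0 := by
  simp [qm1]

theorem qm1_succ_left (a : ℕ) : qm1 l u (a + 1) a = u a := by
  simp [qm1]

theorem qm1_succ_right (a : ℕ) : qm1 l u a (a + 1) = -l a := by
  simp [qm1]

theorem qm1_add_qm1_of_mem_uIcc {a b c : ℕ} (h : b ∈ Set.uIcc a c) :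
    qm1 l u a b + qm1 l u b c = qm1 l u a c := by
  rcases Set.mem_uIcc.mp h with ⟨hab, hbc⟩ | ⟨hcb, hba⟩
  · simp only [qm1, Ico_eq_empty_of_le hab, Ico_eq_empty_of_le hbc,
      Ico_eq_empty_of_le (hab.trans hbc), sum_empty, ← sum_Ico_consecutive l hab hbc]
    ring
  · simp only [qm1, Ico_eq_empty_of_le hcb, Ico_eq_empty_of_le hba,
      Ico_eq_empty_of_le (hcb.trans hba), sum_empty, ← sum_Ico_consecutive u hcb hba]
    ring

theorem qm1_add_qm1_swap_nonneg {n a b : ℕ} (hlu : ∀ t, 1 ≤ t → t + 1 ≤ n → l t ≤ u t)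
    (ha : 1 ≤ a ∧ a ≤ n) (hb : 1 ≤ b ∧ b ≤ n) : 0 ≤ qm1 l u a b + qm1 l u b a := by
  have key : ∀ p q, 1 ≤ p → q ≤ n → 0 ≤ ∑ t ∈ Ico p q, (u t - l t) := fun p q hp hq =>
    sum_nonneg fun t ht => by
      rw [mem_Ico] at ht
      linarith [hlu t (by omega) (by omega)]
  have h₁ := key a b ha.1 hb.2
  have h₂ := key b a hb.1 ha.2
  simp only [sum_sub_distrib] at h₁ h₂
  simp only [qm1]
  linarith

theorem qm1_triangle {n a b c : ℕ} (hlu : ∀ t, 1 ≤ t → t + 1 ≤ n → l t ≤ u t)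
    (ha : 1 ≤ a ∧ a ≤ n) (hb : 1 ≤ b ∧ b ≤ n) (hc : 1 ≤ c ∧ c ≤ n) :
    qm1 l u a c ≤ qm1 l u a b + qm1 l u b c := by
  have hmid : b ∈ Set.uIcc a c ∨ c ∈ Set.uIcc a b ∨ a ∈ Set.uIcc b c := by
    simp only [Set.mem_uIcc]
    omega
  rcases hmid with h | h | h
  · exact (qm1_add_qm1_of_mem_uIcc h).ge
  · linarith [qm1_add_qm1_of_mem_uIcc (l := l) (u := u) h, qm1_add_qm1_swap_nonneg hlu hc hb]
  · linarith [qm1_add_qm1_of_mem_uIcc (l := l) (u := u) h, qm1_add_qm1_swap_nonneg hlu ha hb]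

end qm1

section qm

variable {n d : ℕ} {l u : Fin d → ℕ → ℝ} {x y z : Fin d → ℕ}

theorem qm_eq_sum_qm1 : qm d l u x y = ∑ r, qm1 (l r) (u r) (x r) (y r) := rfl

theorem qm_self : qm d l u x x = 0 := by
  simp [qm]

theorem qm_add_qm_of_mem_uIcc (h : ∀ r, y r ∈ Set.uIcc (x r) (z r)) :
    qm d l u x y + qm d l u y z = qm d l u x z := by
  simp only [qm_eq_sum_qm1, ← sum_add_distrib]
  exact sum_congr rfl fun r _ => qm1_add_qm1_of_mem_uIcc (h r)

theorem qm_triangle (hlu : ∀ r t, 1 ≤ t → t + 1 ≤ n → l r t ≤ u r t)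
    (hx : inGrid n d x) (hy : inGrid n d y) (hz : inGrid n d z) :
    qm d l u x z ≤ qm d l u x y + qm d l u y z := by
  simp only [qm_eq_sum_qm1, ← sum_add_distrib]
  exact sum_le_sum fun r _ => qm1_triangle (hlu r) (hx r) (hy r) (hz r)

theorem qm_update_succ_left (r : Fin d) : qm d l u (update x r (x r + 1)) x = u r (x r) := by
  rw [qm_eq_sum_qm1, sum_eq_single r (fun s _ hs => by rw [update_of_ne hs, qm1_self])
    (by simp), update_self, qm1_succ_left]

theorem qm_update_succ_right (r : Fin d) : qm d l u x (update x r (x r + 1)) = -l r (x r) := by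
  rw [qm_eq_sum_qm1, sum_eq_single r (fun s _ hs => by rw [update_of_ne hs, qm1_self])
    (by simp), update_self, qm1_succ_right]

theorem qm_neg_swap : qm d (-u) (-l) x y = qm d l u y x := by
  simp only [qm, Pi.neg_apply, sum_neg_distrib]
  exact sum_congr rfl fun r _ => by ring

end qm

def gridDist {d : ℕ} (x y : Fin d → ℕ) : ℕ := ∑ r, Nat.dist (x r) (y r)

section gridDist

variable {d : ℕ} {x y z : Fin d → ℕ}

theorem gridDist_add_of_mem_uIcc (h : ∀ r, y r ∈ Set.uIcc (x r) (z r)) :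
    gridDist x y + gridDist y z = gridDist x z := by
  simp only [gridDist, ← sum_add_distrib]
  refine sum_congr rfl fun r _ => ?_
  have := Set.mem_uIcc.mp (h r)
  unfold Nat.dist
  omega

theorem gridDist_pos (h : x ≠ y) : 0 < gridDist x y := by
  obtain ⟨r, hr⟩ := Function.ne_iff.mp h
  exact (Nat.dist_pos_of_ne hr).trans_le
    (single_le_sum (f := fun r => Nat.dist (x r) (y r)) (fun _ _ => Nat.zero_le _) (mem_univ r))

theorem update_succ_mem_uIcc {r : Fin d} (h : x r < y r) (s : Fin d) :
    update x r (x r + 1) s ∈ Set.uIcc (x s) (y s) := by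
  rcases eq_or_ne s r with rfl | hs
  · rw [update_self]
    exact Set.mem_uIcc_of_le (by omega) h
  · rw [update_of_ne hs]
    exact Set.left_mem_uIcc

end gridDist

theorem sub_le_qm {n d : ℕ} {l u : Fin d → ℕ → ℝ} {g : (Fin d → ℕ) → ℝ}
    (hg : memP n d l u g) {x y : Fin d → ℕ} (hx : inGrid n d x) (hy : inGrid n d y) :
    g x - g y ≤ qm d l u x y := by
  induction hk : gridDist x y using Nat.strong_induction_on generalizing x y with
  | _ k ih =>
  by_cases hxy : x = y
  · simp [hxy, qm_self]
  obtain ⟨r, hr⟩ := Function.ne_iff.mp hxy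
  rcases hr.lt_or_gt with hlt | hgt
  · have hrn : x r + 1 ≤ n := by linarith [(hy r).2]
    have hbet := update_succ_mem_uIcc hlt
    have hcloser : gridDist (update x r (x r + 1)) y < k := by
      have := gridDist_add_of_mem_uIcc hbet
      have := gridDist_pos (x := x) (y := update x r (x r + 1)) fun h => by
        simpa using congrFun h r
      omega
    have hrest := ih _ hcloser (inGrid_update_succ hx hrn) hy rfl
    have hstep := (hg r x hx hrn).1
    have hsplit := qm_add_qm_of_mem_uIcc (l := l) (u := u) hbet
    rw [qm_update_succ_right] at hsplit
    linarith
  · have hrn : y r + 1 ≤ n := by linarith [(hx r).2]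
    have hbet : ∀ s, update y r (y r + 1) s ∈ Set.uIcc (x s) (y s) := fun s => by
      rw [Set.uIcc_comm]
      exact update_succ_mem_uIcc hgt s
    have hcloser : gridDist x (update y r (y r + 1)) < k := by
      have := gridDist_add_of_mem_uIcc hbet
      have := gridDist_pos (x := update y r (y r + 1)) (y := y) fun h => by
        simpa using congrFun h r
      omega
    have hrest := ih _ hcloser hx (inGrid_update_succ hy hrn) rfl
    have hstep := (hg r y hy hrn).2
    have hsplit := qm_add_qm_of_mem_uIcc (l := l) (u := u) hbet
    rw [qm_update_succ_left] at hsplit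
    linarith

section tight

variable {n d : ℕ} {l u : Fin d → ℕ → ℝ} {g : (Fin d → ℕ) → ℝ}

theorem sub_eq_qm_trans (hlu : ∀ r t, 1 ≤ t → t + 1 ≤ n → l r t ≤ u r t)
    (hg : memP n d l u g) {x y z : Fin d → ℕ}
    (hx : inGrid n d x) (hy : inGrid n d y) (hz : inGrid n d z)
    (hxy : g x - g y = qm d l u x y) (hyz : g y - g z = qm d l u y z) :
    g x - g z = qm d l u x z :=
  (sub_le_qm hg hx hz).antisymm (by linarith [qm_triangle hlu hx hy hz])

open Classical in
noncomputable def tightSet (n d : ℕ) (l u : Fin d → ℕ → ℝ) (g : (Fin d → ℕ) → ℝ)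
    (S : Finset (Fin d → ℕ)) : Finset (Fin d → ℕ) :=
  (grid n d).filter fun z => ∃ s ∈ S, g s - g z = qm d l u s z

variable {S : Finset (Fin d → ℕ)} {x : Fin d → ℕ} {r : Fin d}

theorem sub_lt_of_notMem_tightSet (hlu : ∀ r t, 1 ≤ t → t + 1 ≤ n → l r t ≤ u r t)
    (hg : memP n d l u g) (hS : ∀ s ∈ S, inGrid n d s) (hx : inGrid n d x)
    (hr : x r + 1 ≤ n) (hxS : x ∉ tightSet n d l u g S)
    (hx'S : update x r (x r + 1) ∈ tightSet n d l u g S) :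
    g (update x r (x r + 1)) - g x < u r (x r) := by
  obtain ⟨-, s, hs, hsx'⟩ := mem_filter.mp hx'S
  refine (hg r x hx hr).2.lt_of_ne fun heq => hxS (mem_filter.mpr ⟨mem_grid.mpr hx, s, hs, ?_⟩)
  exact sub_eq_qm_trans hlu hg (hS s hs) (inGrid_update_succ hx hr) hx hsx'
    (by rw [qm_update_succ_left, heq])

theorem lt_sub_of_mem_tightSet (hlu : ∀ r t, 1 ≤ t → t + 1 ≤ n → l r t ≤ u r t)
    (hg : memP n d l u g) (hS : ∀ s ∈ S, inGrid n d s) (hx : inGrid n d x)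
    (hr : x r + 1 ≤ n) (hxS : x ∈ tightSet n d l u g S)
    (hx'S : update x r (x r + 1) ∉ tightSet n d l u g S) :
    l r (x r) < g (update x r (x r + 1)) - g x := by
  obtain ⟨-, s, hs, hsx⟩ := mem_filter.mp hxS
  have hx' := inGrid_update_succ hx hr
  refine (hg r x hx hr).1.lt_of_ne fun heq =>
    hx'S (mem_filter.mpr ⟨mem_grid.mpr hx', s, hs, ?_⟩)
  exact sub_eq_qm_trans hlu hg (hS s hs) hx hx' hsx
    (by rw [qm_update_succ_right, heq]; ring)

end tight

def raiseOn {α : Type*} [DecidableEq α] (U : Finset α) (g : α → ℝ) (ε : ℝ) (z : α) : ℝ :=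
  if z ∈ U then g z + ε else g z

theorem eventually_memP_raiseOn {n d : ℕ} {l u : Fin d → ℕ → ℝ} {g : (Fin d → ℕ) → ℝ}
    (hg : memP n d l u g) (U : Finset (Fin d → ℕ))
    (hout : ∀ x r, inGrid n d x → x r + 1 ≤ n → x ∉ U → update x r (x r + 1) ∈ U →
      g (update x r (x r + 1)) - g x < u r (x r))
    (hin : ∀ x r, inGrid n d x → x r + 1 ≤ n → x ∈ U → update x r (x r + 1) ∉ U →
      l r (x r) < g (update x r (x r + 1)) - g x) :
    ∀ᶠ ε in 𝓝[>] (0 : ℝ), memP n d l u (raiseOn U g ε) := by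
  have key : ∀ r, ∀ x ∈ grid n d, ∀ᶠ ε in 𝓝[>] (0 : ℝ), x r + 1 ≤ n →
      l r (x r) ≤ raiseOn U g ε (update x r (x r + 1)) - raiseOn U g ε x ∧
      raiseOn U g ε (update x r (x r + 1)) - raiseOn U g ε x ≤ u r (x r) := by
    intro r x hx
    rw [mem_grid] at hx
    by_cases hr : x r + 1 ≤ n
    swap
    · exact Eventually.of_forall fun _ h => absurd h hr
    have hb := hg r x hx hr
    by_cases h₁ : x ∈ U <;> by_cases h₂ : update x r (x r + 1) ∈ U
    · refine Eventually.of_forall fun ε _ => ?_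
      simp only [raiseOn, if_pos h₁, if_pos h₂]
      constructor <;> linarith [hb.1, hb.2]
    · filter_upwards [eventually_mem_nhdsWithin,
        nhdsWithin_le_nhds (eventually_lt_nhds (sub_pos.2 (hin x r hx hr h₁ h₂)))]
        with ε (hε : 0 < ε) hε' _
      simp only [raiseOn, if_pos h₁, if_neg h₂]
      constructor <;> linarith [hb.1, hb.2]
    · filter_upwards [eventually_mem_nhdsWithin,
        nhdsWithin_le_nhds (eventually_lt_nhds (sub_pos.2 (hout x r hx hr h₁ h₂)))]
        with ε (hε : 0 < ε) hε' _
      simp only [raiseOn, if_neg h₁, if_pos h₂]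
      constructor <;> linarith [hb.1, hb.2]
    · refine Eventually.of_forall fun ε _ => ?_
      simp only [raiseOn, if_neg h₁, if_neg h₂]
      exact hb
  filter_upwards [eventually_all.2 fun r => (eventually_all_finset _).2 (key r)]
    with ε h r x hx hr
  exact h r x (mem_grid.mpr hx) hr

def IsBestFit (n d : ℕ) (l u : Fin d → ℕ → ℝ) (f g : (Fin d → ℕ) → ℝ) : Prop :=
  memP n d l u g ∧ ∀ g', memP n d l u g' →
    ∑ x ∈ grid n d, |f x - g x| ≤ ∑ x ∈ grid n d, |f x - g' x|

theorem card_filter_lt_le_card_filter_le {n d : ℕ} {l u : Fin d → ℕ → ℝ}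
    {f g : (Fin d → ℕ) → ℝ} (hbest : IsBestFit n d l u f g) {U : Finset (Fin d → ℕ)}
    (hU : U ⊆ grid n d) (hraise : ∀ᶠ ε in 𝓝[>] (0 : ℝ), memP n d l u (raiseOn U g ε)) :
    #(U.filter fun z => g z < f z) ≤ #(U.filter fun z => f z ≤ g z) := by
  have hsmall : ∀ᶠ ε in 𝓝[>] (0 : ℝ), 0 < ε ∧ ∀ z ∈ U, g z < f z → ε ≤ f z - g z := by
    refine eventually_mem_nhdsWithin.and ((eventually_all_finset U).2 fun z _ => ?_)
    by_cases h : g z < f z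
    · filter_upwards [nhdsWithin_le_nhds (eventually_lt_nhds (sub_pos.2 h))] with ε hε _
        using hε.le
    · exact Eventually.of_forall fun _ h' => absurd h' h
  obtain ⟨ε, hmem, hεpos, hεle⟩ := (hraise.and hsmall).exists
  have hpoint : ∀ z ∈ U, |f z - raiseOn U g ε z| - |f z - g z| ≤ if g z < f z then -ε else ε := by
    intro z hz
    rw [raiseOn, if_pos hz]
    split_ifs with h
    · rw [abs_of_pos (sub_pos.2 h), abs_of_nonneg (by linarith [hεle z hz h])]
      linarith
    · calc _ ≤ |(f z - (g z + ε)) - (f z - g z)| := abs_sub_abs_le_abs_sub _ _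
        _ = ε := by rw [show f z - (g z + ε) - (f z - g z) = -ε by ring, abs_neg, abs_of_pos hεpos]
  have hcost : ∑ z ∈ grid n d, |f z - raiseOn U g ε z| = ∑ z ∈ grid n d, |f z - g z| +
      ∑ z ∈ U, (|f z - raiseOn U g ε z| - |f z - g z|) := by
    rw [sum_subset hU fun z _ hz => by simp [raiseOn, hz], sum_sub_distrib]
    ring
  have hgain : ∑ z ∈ U, (|f z - raiseOn U g ε z| - |f z - g z|) ≤
      ε * #(U.filter fun z => f z ≤ g z) - ε * #(U.filter fun z => g z < f z) := by
    refine (sum_le_sum hpoint).trans_eq ?_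
    simp only [sum_ite, sum_const, nsmul_eq_mul, not_lt]
    ring
  have hopt := hbest.2 _ hmem
  exact_mod_cast le_of_mul_le_mul_left (by linarith : ε * #(U.filter fun z => g z < f z) ≤
    ε * #(U.filter fun z => f z ≤ g z)) hεpos

theorem exists_injOn_of_forall_card_le_card_biUnion {α : Type*} [DecidableEq α]
    (A : Finset α) (t : α → Finset α) (h : ∀ S ⊆ A, #S ≤ #(S.biUnion t)) :
    ∃ φ : α → α, Set.InjOn φ A ∧ ∀ a ∈ A, φ a ∈ t a := by
  obtain ⟨F, hFinj, hF⟩ :=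
    (all_card_le_biUnion_card_iff_exists_injective fun a : A => t a).mp fun S => by
      rw [← card_image_of_injective S Subtype.val_injective, ← image_biUnion]
      exact h _ fun a ha => by
        obtain ⟨a, -, rfl⟩ := mem_image.mp ha
        exact a.2
  refine ⟨fun a => if ha : a ∈ A then F ⟨a, ha⟩ else a, fun a ha b hb hab => ?_, fun a ha => ?_⟩
  · simp only [Finset.mem_coe] at ha hb
    simp only [dif_pos ha, dif_pos hb] at hab
    exact congrArg Subtype.val (hFinj hab)
  · simp only [dif_pos ha]
    exact hF _

def IsEdge (n d : ℕ) (l u : Fin d → ℕ → ℝ) (f g : (Fin d → ℕ) → ℝ) (x y : Fin d → ℕ) : Prop :=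
  inGrid n d x ∧ inGrid n d y ∧ g x ≤ f x ∧ f y ≤ g y ∧ x ≠ y ∧ g x - g y = qm d l u x y

section hall

variable {n d : ℕ} {l u : Fin d → ℕ → ℝ} {f g : (Fin d → ℕ) → ℝ}

open Classical in
theorem card_le_card_biUnion_isEdge (hlu : ∀ r t, 1 ≤ t → t + 1 ≤ n → l r t ≤ u r t)
    (hbest : IsBestFit n d l u f g) {S : Finset (Fin d → ℕ)}
    (hS : ∀ s ∈ S, inGrid n d s ∧ g s < f s) :
    #S ≤ #(S.biUnion fun x => (grid n d).filter (IsEdge n d l u f g x)) := by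
  set U := tightSet n d l u g S
  have hSU : S ⊆ U.filter fun z => g z < f z := fun s hs =>
    mem_filter.mpr ⟨mem_filter.mpr ⟨mem_grid.mpr (hS s hs).1, s, hs, by rw [qm_self, sub_self]⟩,
      (hS s hs).2⟩
  have hUS : (U.filter fun z => f z ≤ g z) ⊆
      S.biUnion fun x => (grid n d).filter (IsEdge n d l u f g x) := by
    intro z hz
    obtain ⟨⟨hz, s, hs, hsz⟩, hfz⟩ := mem_filter.mp hz |>.imp_left mem_filter.mp
    refine mem_biUnion.mpr ⟨s, hs, mem_filter.mpr ⟨hz, (hS s hs).1, mem_grid.mp hz,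
      (hS s hs).2.le, hfz, ?_, hsz⟩⟩
    rintro rfl
    linarith [(hS s hs).2]
  have hSgrid : ∀ s ∈ S, inGrid n d s := fun s hs => (hS s hs).1
  have hraise := eventually_memP_raiseOn hbest.1 U
    (fun _ _ hx hr h₁ h₂ => sub_lt_of_notMem_tightSet hlu hbest.1 hSgrid hx hr h₁ h₂)
    (fun _ _ hx hr h₁ h₂ => lt_sub_of_mem_tightSet hlu hbest.1 hSgrid hx hr h₁ h₂)
  calc #S ≤ #(U.filter fun z => g z < f z) := card_le_card hSU
    _ ≤ #(U.filter fun z => f z ≤ g z) :=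
      card_filter_lt_le_card_filter_le hbest (filter_subset _ _) hraise
    _ ≤ _ := card_le_card hUS

open Classical in
theorem exists_injOn_isEdge (hlu : ∀ r t, 1 ≤ t → t + 1 ≤ n → l r t ≤ u r t)
    (hbest : IsBestFit n d l u f g) {A : Finset (Fin d → ℕ)}
    (hA : ∀ x ∈ A, inGrid n d x ∧ g x < f x) :
    ∃ φ : (Fin d → ℕ) → (Fin d → ℕ), Set.InjOn φ A ∧ ∀ x ∈ A, IsEdge n d l u f g x (φ x) := by
  obtain ⟨φ, hinj, hφ⟩ := exists_injOn_of_forall_card_le_card_biUnion A _ fun S hS =>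
    card_le_card_biUnion_isEdge hlu hbest fun s hs => hA s (hS hs)
  exact ⟨φ, hinj, fun x hx => (mem_filter.mp (hφ x hx)).2⟩

theorem memP_neg (hg : memP n d l u g) : memP n d (-u) (-l) (-g) := fun r x hx hr => by
  simp only [Pi.neg_apply]
  constructor <;> linarith [(hg r x hx hr).1, (hg r x hx hr).2]

theorem IsBestFit.neg (h : IsBestFit n d l u f g) : IsBestFit n d (-u) (-l) (-f) (-g) := by
  refine ⟨memP_neg h.1, fun g' hg' => ?_⟩
  have hneg : ∀ a b : ℝ, |-a - b| = |a - -b| := fun a b => by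
    rw [← abs_neg]
    congr 1
    ring
  simpa only [Pi.neg_apply, hneg, neg_neg] using h.2 (-g') (by simpa using memP_neg hg')

theorem isEdge_neg {x y : Fin d → ℕ} :
    IsEdge n d (-u) (-l) (-f) (-g) x y ↔ IsEdge n d l u f g y x := by
  simp only [IsEdge, qm_neg_swap, Pi.neg_apply, neg_le_neg_iff]
  constructor <;> rintro ⟨h₁, h₂, h₃, h₄, h₅, h₆⟩ <;> exact ⟨h₂, h₁, h₄, h₃, h₅.symm, by linarith⟩

end hall

inductive AltReach {α : Type*} (A B : Finset α) (φ ψ : α → α) : α → Prop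
  | start {b : α} : b ∈ B → (∀ a ∈ A, φ a ≠ b) → AltReach A B φ ψ b
  | step {b : α} : AltReach A B φ ψ b → b ∈ B → ψ b ∈ A → AltReach A B φ ψ (φ (ψ b))

open Classical in
/-- The Mendelsohn–Dulmage matching: on the vertices of `B` reached by `AltReach` the `ψ`-edges
are used, elsewhere the `φ`-edges. -/
noncomputable def altMatching {α : Type*} (A B : Finset α) (φ ψ : α → α) : Finset (α × α) :=
  (B.filter (AltReach A B φ ψ)).image (fun b => (ψ b, b)) ∪
    (A.filter fun a => ∀ b ∈ B, AltReach A B φ ψ b → ψ b ≠ a).image fun a => (a, φ a)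

section matching

variable {α : Type*} {A B : Finset α} {φ ψ : α → α}

theorem AltReach.exists_of_apply (hφ : Set.InjOn φ A) {a : α} (ha : a ∈ A)
    (h : AltReach A B φ ψ (φ a)) : ∃ b ∈ B, ψ b = a ∧ AltReach A B φ ψ b := by
  generalize hb : φ a = b at h
  cases h with
  | start _ hmiss => exact absurd hb (hmiss a ha)
  | step hreach hB hA => exact ⟨_, hB, hφ hA ha hb.symm, hreach⟩

theorem mem_altMatching {p : α × α} : p ∈ altMatching A B φ ψ ↔
    (∃ b ∈ B, AltReach A B φ ψ b ∧ p = (ψ b, b)) ∨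
      ∃ a ∈ A, (∀ b ∈ B, AltReach A B φ ψ b → ψ b ≠ a) ∧ p = (a, φ a) := by
  simp only [altMatching, mem_union, mem_image, mem_filter, and_assoc, eq_comm]

theorem altMatching_fst_injOn (hψ : Set.InjOn ψ B) :
    Set.InjOn Prod.fst (altMatching A B φ ψ : Set (α × α)) := by
  intro p hp q hq hpq
  rcases mem_altMatching.mp hp with ⟨b, hb, hRb, rfl⟩ | ⟨a, ha, hfree, rfl⟩ <;>
    rcases mem_altMatching.mp hq with ⟨b', hb', hRb', rfl⟩ | ⟨a', ha', hfree', rfl⟩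
  · rw [hψ hb hb' hpq]
  · exact absurd hpq (hfree' b hb hRb)
  · exact absurd hpq.symm (hfree b' hb' hRb')
  · simp only at hpq
    rw [hpq]

theorem altMatching_snd_injOn (hφ : Set.InjOn φ A) :
    Set.InjOn Prod.snd (altMatching A B φ ψ : Set (α × α)) := by
  have hcross : ∀ a ∈ A, (∀ b ∈ B, AltReach A B φ ψ b → ψ b ≠ a) → ¬AltReach A B φ ψ (φ a) :=
    fun a ha hfree hR => by
      obtain ⟨b, hb, hψb, hRb⟩ := AltReach.exists_of_apply hφ ha hR
      exact hfree b hb hRb hψb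
  intro p hp q hq hpq
  rcases mem_altMatching.mp hp with ⟨b, hb, hRb, rfl⟩ | ⟨a, ha, hfree, rfl⟩ <;>
    rcases mem_altMatching.mp hq with ⟨b', hb', hRb', rfl⟩ | ⟨a', ha', hfree', rfl⟩
  · simp only at hpq
    rw [hpq]
  · simp only at hpq
    exact absurd (hpq ▸ hRb) (hcross a' ha' hfree')
  · simp only at hpq
    exact absurd (hpq ▸ hRb') (hcross a ha hfree)
  · rw [hφ ha ha' hpq]

theorem exists_matching_of_injOn (E : α → α → Prop)
    (hφE : ∀ a ∈ A, E a (φ a)) (hφ : Set.InjOn φ A)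
    (hψE : ∀ b ∈ B, E (ψ b) b) (hψ : Set.InjOn ψ B) :
    ∃ M : Finset (α × α), (∀ p ∈ M, E p.1 p.2) ∧
      (∀ p ∈ M, ∀ q ∈ M, p ≠ q → p.1 ≠ q.1 ∧ p.2 ≠ q.2) ∧
      (∀ a ∈ A, ∃ p ∈ M, p.1 = a) ∧ (∀ b ∈ B, ∃ p ∈ M, p.2 = b) := by
  refine ⟨altMatching A B φ ψ, fun p hp => ?_, fun p hp q hq hpq =>
    ⟨mt (altMatching_fst_injOn hψ hp hq) hpq, mt (altMatching_snd_injOn hφ hp hq) hpq⟩,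
    fun a ha => ?_, fun b hb => ?_⟩
  · rcases mem_altMatching.mp hp with ⟨b, hb, -, rfl⟩ | ⟨a, ha, -, rfl⟩
    exacts [hψE b hb, hφE a ha]
  · by_cases hfree : ∀ b ∈ B, AltReach A B φ ψ b → ψ b ≠ a
    · exact ⟨_, mem_altMatching.mpr (.inr ⟨a, ha, hfree, rfl⟩), rfl⟩
    · push Not at hfree
      obtain ⟨b, hb, hRb, hψb⟩ := hfree
      exact ⟨_, mem_altMatching.mpr (.inl ⟨b, hb, hRb, rfl⟩), hψb⟩
  · by_cases hRb : AltReach A B φ ψ b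
    · exact ⟨_, mem_altMatching.mpr (.inl ⟨b, hb, hRb, rfl⟩), rfl⟩
    · obtain ⟨a, ha, rfl⟩ : ∃ a ∈ A, φ a = b := by
        by_contra! hmiss
        exact hRb (.start hb hmiss)
      have hfree : ∀ b' ∈ B, AltReach A B φ ψ b' → ψ b' ≠ a := fun b' hb' hRb' hψb' =>
        hRb (hψb' ▸ AltReach.step hRb' hb' (hψb' ▸ ha))
      exact ⟨_, mem_altMatching.mpr (.inr ⟨a, ha, hfree, rfl⟩), rfl⟩

end matching

theorem stmt10_general (n d : ℕ)
    (l u : Fin d → ℕ → ℝ)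
    (hlu : ∀ r : Fin d, ∀ t : ℕ, 1 ≤ t → t + 1 ≤ n → l r t < u r t)
    (f g : (Fin d → ℕ) → ℝ)
    (hg : memP n d l u g)
    (hmin : ∀ g' : (Fin d → ℕ) → ℝ, memP n d l u g' →
      ∑ x ∈ Finset.Icc (fun _ => (1:ℕ)) (fun _ => n), |f x - g x|
        ≤ ∑ x ∈ Finset.Icc (fun _ => (1:ℕ)) (fun _ => n), |f x - g' x|) :
    ∃ M : Finset ((Fin d → ℕ) × (Fin d → ℕ)),
      -- every pair of `M` is an edge of the bipartite graph `B_f`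
      (∀ p ∈ M, inGrid n d p.1 ∧ inGrid n d p.2 ∧
        g p.1 ≤ f p.1 ∧ f p.2 ≤ g p.2 ∧ p.1 ≠ p.2 ∧
        g p.1 - g p.2 = qm d l u p.1 p.2) ∧
      -- `M` is a matching of the bipartite graph
      (∀ p ∈ M, ∀ p' ∈ M, p ≠ p' → p.1 ≠ p'.1 ∧ p.2 ≠ p'.2) ∧
      -- `M` matches every vertex of `D_> ∪ D_<`
      (∀ x : Fin d → ℕ, inGrid n d x → f x ≠ g x →
        ∃ p ∈ M, p.1 = x ∨ p.2 = x) := by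
  have hbest : IsBestFit n d l u f g := ⟨hg, hmin⟩
  have hle : ∀ r t, 1 ≤ t → t + 1 ≤ n → l r t ≤ u r t := fun r t h₁ h₂ => (hlu r t h₁ h₂).le
  obtain ⟨φ, hφinj, hφ⟩ := exists_injOn_isEdge hle hbest
    (A := (grid n d).filter fun x => g x < f x) fun x hx => by
      simpa only [mem_filter, mem_grid] using hx
  obtain ⟨ψ, hψinj, hψ⟩ := exists_injOn_isEdge (l := -u) (u := -l)
    (fun r t h₁ h₂ => neg_le_neg (hle r t h₁ h₂)) hbest.neg
    (A := (grid n d).filter fun x => f x < g x) fun x hx => by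
      simpa only [mem_filter, mem_grid, Pi.neg_apply, neg_lt_neg_iff] using hx
  obtain ⟨M, hME, hM, hcovA, hcovB⟩ := exists_matching_of_injOn (IsEdge n d l u f g)
    hφ hφinj (fun y hy => isEdge_neg.mp (hψ y hy)) hψinj
  refine ⟨M, hME, hM, fun x hx hfg => ?_⟩
  rcases hfg.lt_or_gt with hlt | hgt
  · obtain ⟨p, hp, rfl⟩ := hcovB x (mem_filter.mpr ⟨mem_grid.mpr hx, hlt⟩)
    exact ⟨p, hp, .inr rfl⟩
  · obtain ⟨p, hp, rfl⟩ := hcovA x (mem_filter.mpr ⟨mem_grid.mpr hx, hgt⟩)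
    exact ⟨p, hp, .inl rfl⟩

/-- if `g ∈ P(B)` attains the minimum `L_1`-distance to `f`, then the
bipartite graph `B_f` (left part `D_> ∪ D_=`, right part `D_< ∪ D_=`, edges the pairs
`(x,y)` with `x ≠ y` and `g(x) − g(y) = m(x,y)`) contains a matching that matches
every vertex of `D_> ∪ D_<`. -/
theorem stmt10 (n d : ℕ) (hn : 2 ≤ n) (hd : 1 ≤ d)
    (l u : Fin d → ℕ → ℝ)
    (hlu : ∀ r : Fin d, ∀ t : ℕ, 1 ≤ t → t + 1 ≤ n → l r t < u r t)
    (f g : (Fin d → ℕ) → ℝ)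
    (hg : memP n d l u g)
    (hmin : ∀ g' : (Fin d → ℕ) → ℝ, memP n d l u g' →
      ∑ x ∈ Finset.Icc (fun _ => (1:ℕ)) (fun _ => n), |f x - g x|
        ≤ ∑ x ∈ Finset.Icc (fun _ => (1:ℕ)) (fun _ => n), |f x - g' x|) :
    ∃ M : Finset ((Fin d → ℕ) × (Fin d → ℕ)),
      -- every pair of `M` is an edge of the bipartite graph `B_f`
      (∀ p ∈ M, inGrid n d p.1 ∧ inGrid n d p.2 ∧
        g p.1 ≤ f p.1 ∧ f p.2 ≤ g p.2 ∧ p.1 ≠ p.2 ∧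
        g p.1 - g p.2 = qm d l u p.1 p.2) ∧
      -- `M` is a matching of the bipartite graph
      (∀ p ∈ M, ∀ p' ∈ M, p ≠ p' → p.1 ≠ p'.1 ∧ p.2 ≠ p'.2) ∧
      -- `M` matches every vertex of `D_> ∪ D_<`
      (∀ x : Fin d → ℕ, inGrid n d x → f x ≠ g x →
        ∃ p ∈ M, p.1 = x ∨ p.2 = x) :=
  stmt10_general n d l u hlu f g hg hmin
end
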